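/- arXiv:2204.09960 — 2 statements merged into one kernel-verified Lean document; each statement's English description precedes it below -/
import Mathlib

section
/- For all atomic propositions a, b ∈ P, the PPLTL formula O(a ∧ H(a ∨ ¬b)) ∨ H(¬b) is equivalent to the LTLf formula (¬b U a) ∨ G(¬b): for every finite nonempty trace τ over P, τ ⊨ O(a ∧ H(a ∨ ¬b)) ∨ H(¬b) if and only if τ ⊨ (¬b U a) ∨ G(¬b). -/
inductive PPLTL (P : Type) : Type
  | atom : P → PPLTL P
  | neg : PPLTL P → PPLTL P
  | conj : PPLTL P → PPLTL P → PPLTL P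
  | yesterday : PPLTL P → PPLTL P
  | since : PPLTL P → PPLTL P → PPLTL P

namespace PPLTL

variable {P : Type}

/-- Satisfaction of a pure-past LTL formula on the trace `τ` at instant `i`
(for a trace `s₀ ⋯ sₙ`, satisfaction at `i ≤ n` only depends on `s₀, …, sᵢ`). -/
def Sat (τ : ℕ → Set P) : PPLTL P → ℕ → Prop
  | atom p, i => p ∈ τ i
  | neg φ, i => ¬ Sat τ φ i
  | conj φ ψ, i => Sat τ φ i ∧ Sat τ ψ i
  | yesterday φ, i => 1 ≤ i ∧ Sat τ φ (i - 1)
  | since φ ψ, i => ∃ k, k ≤ i ∧ Sat τ ψ k ∧ ∀ j, k < j → j ≤ i → Sat τ φ j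

/-- Disjunction: `φ ∨ ψ ≡ ¬(¬φ ∧ ¬ψ)`. -/
def por (φ ψ : PPLTL P) : PPLTL P := neg (conj (neg φ) (neg ψ))

/-- Implication: `φ → ψ ≡ ¬φ ∨ ψ`. -/
def pimp (φ ψ : PPLTL P) : PPLTL P := por (neg φ) ψ

/-- `true ≡ p ∨ ¬p`. -/
def ptrue (p : P) : PPLTL P := por (atom p) (neg (atom p))

/-- Once: `O φ ≡ true S φ`. -/
def ponce (p : P) (φ : PPLTL P) : PPLTL P := since (ptrue p) φ

/-- Historically: `H φ ≡ ¬O¬φ`. -/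
def phist (p : P) (φ : PPLTL P) : PPLTL P := neg (ponce p (neg φ))

/-- Weak yesterday: `WY φ ≡ ¬Y¬φ`. -/
def pwy (φ : PPLTL P) : PPLTL P := neg (yesterday (neg φ))

/-- Start: `start ≡ ¬Y true`. -/
def pstart (p : P) : PPLTL P := neg (yesterday (ptrue p))

end PPLTL

inductive LTLf (P : Type) : Type
  | atom : P → LTLf P
  | neg : LTLf P → LTLf P
  | conj : LTLf P → LTLf P → LTLf P
  | next : LTLf P → LTLf P
  | until_ : LTLf P → LTLf P → LTLf P

namespace LTLf

variable {P : Type}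

/-- Satisfaction of an LTLf formula at instant `i` on the finite trace
`s₀ ⋯ sₙ` given by `τ` and the last index `n`. -/
def Sat (τ : ℕ → Set P) (n : ℕ) : LTLf P → ℕ → Prop
  | atom p, i => p ∈ τ i
  | neg ψ, i => ¬ Sat τ n ψ i
  | conj ψ₁ ψ₂, i => Sat τ n ψ₁ i ∧ Sat τ n ψ₂ i
  | next ψ, i => i < n ∧ Sat τ n ψ (i + 1)
  | until_ ψ₁ ψ₂, i =>
      ∃ k, i ≤ k ∧ k ≤ n ∧ Sat τ n ψ₂ k ∧ ∀ j, i ≤ j → j < k → Sat τ n ψ₁ j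

/-- Disjunction: `ψ₁ ∨ ψ₂ ≡ ¬(¬ψ₁ ∧ ¬ψ₂)`. -/
def lor (ψ₁ ψ₂ : LTLf P) : LTLf P := neg (conj (neg ψ₁) (neg ψ₂))

/-- Implication: `ψ₁ → ψ₂ ≡ ¬ψ₁ ∨ ψ₂`. -/
def limp (ψ₁ ψ₂ : LTLf P) : LTLf P := lor (neg ψ₁) ψ₂

/-- Biconditional. -/
def liff (ψ₁ ψ₂ : LTLf P) : LTLf P := conj (limp ψ₁ ψ₂) (limp ψ₂ ψ₁)

/-- `true ≡ p ∨ ¬p`. -/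
def ltrue (p : P) : LTLf P := lor (atom p) (neg (atom p))

/-- Eventually: `F ψ ≡ true U ψ`. -/
def ev (p : P) (ψ : LTLf P) : LTLf P := until_ (ltrue p) ψ

/-- Always: `G ψ ≡ ¬F¬ψ`. -/
def alw (p : P) (ψ : LTLf P) : LTLf P := neg (ev p (neg ψ))

/-- Weak next: `WX ψ ≡ ¬X¬ψ`. -/
def wnext (ψ : LTLf P) : LTLf P := neg (next (neg ψ))

/-- Release: `ψ₁ R ψ₂ ≡ ¬(¬ψ₁ U ¬ψ₂)`. -/
def release (ψ₁ ψ₂ : LTLf P) : LTLf P := neg (until_ (neg ψ₁) (neg ψ₂))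

/-- End of the trace: `end ≡ ¬X true`. -/
def lend (p : P) : LTLf P := neg (next (ltrue p))

end LTLf

namespace PPLTL

variable {P : Type} {τ : ℕ → Set P}

@[simp]
theorem sat_por {φ ψ : PPLTL P} {i : ℕ} : Sat τ (por φ ψ) i ↔ Sat τ φ i ∨ Sat τ ψ i := by
  simp only [por, Sat, not_and_or, not_not]

@[simp]
theorem sat_ptrue {p : P} {i : ℕ} : Sat τ (ptrue p) i := by
  simp only [ptrue, sat_por, Sat, em]

@[simp]
theorem sat_ponce {p : P} {φ : PPLTL P} {i : ℕ} : Sat τ (ponce p φ) i ↔ ∃ k ≤ i, Sat τ φ k := by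
  simp only [ponce, Sat, sat_ptrue, implies_true, and_true]

@[simp]
theorem sat_phist {p : P} {φ : PPLTL P} {i : ℕ} : Sat τ (phist p φ) i ↔ ∀ k ≤ i, Sat τ φ k := by
  simp only [phist, sat_ponce, Sat, not_exists, not_and, not_not]

end PPLTL

namespace LTLf

variable {P : Type} {τ : ℕ → Set P} {n : ℕ}

@[simp]
theorem sat_lor {ψ₁ ψ₂ : LTLf P} {i : ℕ} : Sat τ n (lor ψ₁ ψ₂) i ↔ Sat τ n ψ₁ i ∨ Sat τ n ψ₂ i := by
  simp only [lor, Sat, not_and_or, not_not]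

@[simp]
theorem sat_ltrue {p : P} {i : ℕ} : Sat τ n (ltrue p) i := by
  simp only [ltrue, sat_lor, Sat, em]

@[simp]
theorem sat_alw {p : P} {ψ : LTLf P} {i : ℕ} :
    Sat τ n (alw p ψ) i ↔ ∀ k, i ≤ k → k ≤ n → Sat τ n ψ k := by
  simp only [alw, ev, Sat, sat_ltrue, implies_true, and_true, not_exists, not_and, not_not]

end LTLf

/-- Taking for `k` the first instant where `A` holds turns the left-hand witness into a
right-hand one. -/
theorem exists_forall_le_or_iff_exists_forall_lt {A B : ℕ → Prop} {n : ℕ} :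
    (∃ k ≤ n, A k ∧ ∀ j ≤ k, A j ∨ ¬B j) ↔ ∃ k ≤ n, A k ∧ ∀ j < k, ¬B j := by
  classical
  constructor
  · rintro ⟨k, hkn, hAk, hk⟩
    have hA : ∃ k, A k := ⟨k, hAk⟩
    have hfirst_le : Nat.find hA ≤ k := Nat.find_min' hA hAk
    refine ⟨Nat.find hA, hfirst_le.trans hkn, Nat.find_spec hA, fun j hj => ?_⟩
    exact (hk j (hj.le.trans hfirst_le)).resolve_left (Nat.find_min hA hj)
  · rintro ⟨k, hkn, hAk, hk⟩
    refine ⟨k, hkn, hAk, fun j hj => ?_⟩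
    rcases hj.lt_or_eq with hj | rfl
    · exact Or.inr (hk j hj)
    · exact Or.inl hAk

open PPLTL LTLf in
/-- The PPLTL formula `O(a ∧ H(a ∨ ¬b)) ∨ H(¬b)` is equivalent
to the LTLf formula `(¬b U a) ∨ G(¬b)`. -/
theorem precedence_equiv {P : Type} (a b : P) (τ : ℕ → Set P) (n : ℕ) :
    PPLTL.Sat τ
        (por (ponce a (.conj (.atom a) (phist a (por (.atom a) (.neg (.atom b))))))
          (phist a (.neg (.atom b)))) n ↔
      LTLf.Sat τ n (lor (.until_ (.neg (.atom b)) (.atom a)) (alw a (.neg (.atom b)))) 0 := by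
  simp only [PPLTL.sat_por, sat_ponce, sat_phist, PPLTL.Sat, sat_lor, sat_alw, LTLf.Sat,
    zero_le, true_implies, true_and]
  rw [exists_forall_le_or_iff_exists_forall_lt (A := (a ∈ τ ·)) (B := (b ∈ τ ·))]
end

section
/- For all atomic propositions a, b ∈ P, the PPLTL formula H(O(a ∧ H(a ∨ ¬b)) → Y b) is equivalent to the LTLf formula b R ¬a: for every finite nonempty trace τ over P, τ ⊨ H(O(a ∧ H(a ∨ ¬b)) → Y b) if and only if τ ⊨ b R ¬a. -/
/-!
`b R ¬a` says that every `a`-instant is preceded by a strictly earlier `b`-instant. Under this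
condition the premise `O(a ∧ H(a ∨ ¬b))` never holds: before the first `a`-instant there is a
`b`-instant, which then is a `b` without `a`. Conversely, if some `a`-instant has no earlier `b`,
the premise holds there while `Y b` fails.
-/

namespace PPLTL

variable {P : Type} {τ : ℕ → Set P}

@[simp]
theorem sat_pimp {φ ψ : PPLTL P} {i : ℕ} : Sat τ (pimp φ ψ) i ↔ (Sat τ φ i → Sat τ ψ i) := by
  simp only [pimp, sat_por, Sat, imp_iff_not_or]

end PPLTL

namespace LTLf

variable {P : Type} {τ : ℕ → Set P} {n : ℕ}

theorem sat_release {ψ₁ ψ₂ : LTLf P} {i : ℕ} :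
    Sat τ n (release ψ₁ ψ₂) i ↔
      ∀ k, i ≤ k → k ≤ n → ¬Sat τ n ψ₂ k → ∃ j, i ≤ j ∧ j < k ∧ Sat τ n ψ₁ j := by
  simp only [release, Sat, not_exists, not_and, not_forall, not_not, exists_prop]

end LTLf

theorem exists_le_and_not_of_forall_exists_lt {A B : ℕ → Prop} {n k : ℕ}
    (h : ∀ k ≤ n, A k → ∃ j < k, B j) (hkn : k ≤ n) (hk : A k) : ∃ j ≤ k, B j ∧ ¬A j := by
  classical
  have hA : ∃ m, A m := ⟨k, hk⟩
  have hmin : Nat.find hA ≤ k := Nat.find_min' hA hk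
  obtain ⟨j, hj, hBj⟩ := h _ (hmin.trans hkn) (Nat.find_spec hA)
  exact ⟨j, by omega, hBj, Nat.find_min hA hj⟩

open PPLTL LTLf in
/-- The PPLTL formula `H(O(a ∧ H(a ∨ ¬b)) → Y b)` is
equivalent to the LTLf formula `b R ¬a`. -/
theorem sometime_before_equiv {P : Type} (a b : P) (τ : ℕ → Set P) (n : ℕ) :
    PPLTL.Sat τ
        (phist a (pimp
          (ponce a (.conj (.atom a) (phist a (por (.atom a) (.neg (.atom b))))))
          (.yesterday (.atom b)))) n ↔
      LTLf.Sat τ n (release (.atom b) (.neg (.atom a))) 0 := by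
  simp only [sat_phist, sat_pimp, sat_ponce, sat_por, PPLTL.Sat, sat_release, LTLf.Sat, not_not,
    zero_le, true_implies, true_and]
  constructor
  · intro h k hkn hak
    by_contra! hb
    have hpremise : ∀ j ≤ k, a ∈ τ j ∨ b ∉ τ j := fun j hj =>
      hj.eq_or_lt.elim (fun hjk => .inl (hjk ▸ hak)) (fun hjk => .inr (hb j hjk))
    obtain ⟨hk, hbk⟩ := h k hkn ⟨k, le_rfl, hak, hpremise⟩
    exact hb (k - 1) (by omega) hbk
  · intro h i hin ⟨k, hki, hak, hab⟩
    obtain ⟨j, hjk, hbj, haj⟩ := exists_le_and_not_of_forall_exists_lt h (hki.trans hin) hak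
    exact ((hab j hjk).resolve_left haj hbj).elim
end
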